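/- Let G_k be the complete multipartite graph with parts V0, ..., Vk where |V_i| = 2^i. Then G_k has 2^{k+1} − 1 vertices and its 1-extendable chromatic number is at least k + 1. -/

import Mathlib

open scoped Classical

variable {V : Type*}

/-- `S` is an independent set of the graph `G`. -/
def IndepF (G : SimpleGraph V) (S : Finset V) : Prop :=
  ∀ u ∈ S, ∀ v ∈ S, ¬ G.Adj u v

/-- The independence number of `G`. -/
noncomputable def alphaN [Fintype V] (G : SimpleGraph V) : ℕ :=
  Finset.univ.powerset.sup fun S => if IndepF G S then S.card else 0

/-- `G` is 1-extendable: every vertex belongs to a maximum independent set. -/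
def OneExt [Fintype V] (G : SimpleGraph V) : Prop :=
  ∀ v : V, ∃ S : Finset V, v ∈ S ∧ IndepF G S ∧ S.card = alphaN G

/-- The 1-extendable chromatic number of `G`. -/
noncomputable def chiOneExt [Fintype V] (G : SimpleGraph V) : ℕ :=
  sInf {k | ∃ c : V → Fin k, ∀ i : Fin k, OneExt (G.induce {v | c v = i})}

/-- The join (complete sum) of two graphs. -/
def gJoin {α β : Type*} (G : SimpleGraph α) (H : SimpleGraph β) : SimpleGraph (α ⊕ β) where
  Adj u v := match u, v with
    | Sum.inl u, Sum.inl v => G.Adj u v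
    | Sum.inr u, Sum.inr v => H.Adj u v
    | Sum.inl _, Sum.inr _ => True
    | Sum.inr _, Sum.inl _ => True
  symm := ⟨by rintro (u|u) (v|v) h <;> simp_all [SimpleGraph.adj_comm]⟩
  loopless := ⟨by rintro (u|u) h <;> simp_all⟩

/-- The complete multipartite graph with parts of sizes 1, 2, 4, ..., 2^k. -/
def multipartitePow (k : ℕ) : SimpleGraph (Σ i : Fin (k + 1), Fin (2 ^ (i : ℕ))) where
  Adj a b := a.1 ≠ b.1
  symm := ⟨fun _ _ h => h.symm⟩
  loopless := ⟨fun _ h => h rfl⟩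

/-!
Independent sets of an induced subgraph of a complete multipartite graph are the subsets of
single parts, so a 1-extendable colour class `C_j` meeting the part `V_i` meets it in exactly
`α(C_j)` vertices. For a partition into `m` such classes every part size `2 ^ i` is therefore a
subset sum of `α(C_1), …, α(C_m)`. Having all of `1, 2, …, 2 ^ k` as subset sums forces
`m ≥ k + 1`: inductively there are `n` indices with sum below `2 ^ n`, and a subset summing to
`2 ^ n` contains a further index, whose value is at most `2 ^ n`.
-/

open Finset

theorem exists_card_ge_sum_lt_two_pow {ι : Type*} (s : ι → ℕ) (n : ℕ)
    (h : ∀ i < n, ∃ A : Finset ι, ∑ j ∈ A, s j = 2 ^ i) :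
    ∃ T : Finset ι, n ≤ #T ∧ ∑ j ∈ T, s j < 2 ^ n := by
  induction n with
  | zero => exact ⟨∅, by simp⟩
  | succ n ih =>
    obtain ⟨T, hT_card, hT_sum⟩ := ih fun i hi => h i (by omega)
    obtain ⟨A, hA⟩ := h n (by omega)
    -- `A ⊆ T` would give `2 ^ n = ∑ A ≤ ∑ T < 2 ^ n`.
    obtain ⟨a, haA, haT⟩ : ∃ a ∈ A, a ∉ T := not_subset.mp fun hAT =>
      (sum_le_sum_of_subset hAT).not_gt (hA ▸ hT_sum)
    have ha : s a ≤ 2 ^ n := hA ▸ single_le_sum (fun _ _ => Nat.zero_le _) haA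
    refine ⟨insert a T, by rw [card_insert_of_notMem haT]; omega, ?_⟩
    rw [sum_insert haT, pow_succ]
    omega

theorem le_card_of_two_pow_subset_sums {ι : Type*} [Fintype ι] (s : ι → ℕ) (n : ℕ)
    (h : ∀ i < n, ∃ A : Finset ι, ∑ j ∈ A, s j = 2 ^ i) : n ≤ Fintype.card ι := by
  obtain ⟨T, hT, -⟩ := exists_card_ge_sum_lt_two_pow s n h
  exact hT.trans (card_le_univ T)

section OneExt

variable {W ι : Type*} {G : SimpleGraph W} {p : W → ι}

theorem indepF_iff_of_adj_iff (hG : ∀ u v, G.Adj u v ↔ p u ≠ p v) {S : Finset W} :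
    IndepF G S ↔ ∀ u ∈ S, ∀ v ∈ S, p u = p v := by
  simp [IndepF, hG]

variable [Fintype W]

theorem card_le_alphaN {S : Finset W} (hS : IndepF G S) : #S ≤ alphaN G := by
  have h := le_sup (f := fun S => if IndepF G S then #S else 0) (mem_powerset.mpr (subset_univ S))
  rwa [if_pos hS] at h

theorem alphaN_le_card (G : SimpleGraph W) : alphaN G ≤ Fintype.card W :=
  Finset.sup_le fun S _ => by split_ifs <;> simp [card_le_univ]

theorem oneExt_of_forall_not_adj (h : ∀ u v, ¬ G.Adj u v) : OneExt G := fun v =>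
  ⟨univ, mem_univ v, fun u _ w _ => h u w,
    le_antisymm (card_le_alphaN fun u _ w _ => h u w) (alphaN_le_card G)⟩

/-- Colouring by singletons shows that the set defining `chiOneExt` is nonempty. -/
theorem le_chiOneExt {n : ℕ}
    (h : ∀ m (c : W → Fin m), (∀ i, OneExt (G.induce {v | c v = i})) → n ≤ m) :
    n ≤ chiOneExt G := by
  refine le_csInf ⟨_, Fintype.equivFin W, fun i => oneExt_of_forall_not_adj fun u v huv => ?_⟩
    fun m ⟨c, hc⟩ => h m c hc
  exact huv.ne (Subtype.ext ((Fintype.equivFin W).injective (u.2.trans v.2.symm)))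

theorem alphaN_eq_card_part_of_oneExt (hG : ∀ u v, G.Adj u v ↔ p u ≠ p v) (hext : OneExt G)
    (v : W) : alphaN G = #{u | p u = p v} := by
  obtain ⟨S, hvS, hS, hS_card⟩ := hext v
  have h_part : S ⊆ ({u | p u = p v} : Finset W) := fun u hu => by
    simpa using (indepF_iff_of_adj_iff hG).1 hS u hu v hvS
  have h_indep : IndepF G ({u | p u = p v} : Finset W) :=
    (indepF_iff_of_adj_iff hG).2 fun u hu w hw => by simp_all
  exact le_antisymm (hS_card ▸ card_le_card h_part) (card_le_alphaN h_indep)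

theorem exists_sum_alphaN_eq_card_part (hG : ∀ u v, G.Adj u v ↔ p u ≠ p v)
    {κ : Type*} [Fintype κ] [DecidableEq κ] (c : W → κ)
    (hc : ∀ j, OneExt (G.induce {v | c v = j})) (i : ι) :
    ∃ A : Finset κ, ∑ j ∈ A, alphaN (G.induce {v | c v = j}) = #{v | p v = i} := by
  set f : κ → ℕ := fun j => #{v | p v = i ∧ c v = j}
  have h_alphaN : ∀ j, f j ≠ 0 → alphaN (G.induce {v | c v = j}) = f j := by
    intro j hj
    obtain ⟨v, hv⟩ := card_ne_zero.mp hj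
    simp only [mem_filter, mem_univ, true_and] at hv
    rw [alphaN_eq_card_part_of_oneExt (p := fun u : {v | c v = j} => p u) (fun u w => hG u w)
      (hc j) ⟨v, hv.2⟩]
    calc #{u : {v | c v = j} | p u = p v}
        = #(({u | p u = i} : Finset W).subtype (· ∈ {v | c v = j})) := by
          congr 1; ext u; simp [hv.1]
      _ = f j := by rw [card_subtype, filter_filter]; rfl
  refine ⟨univ.filter fun j => f j ≠ 0, ?_⟩
  rw [sum_congr rfl fun j hj => h_alphaN j (mem_filter.mp hj).2, sum_filter_ne_zero,
    card_eq_sum_card_fiberwise (f := c) (t := univ) fun _ _ => mem_univ _]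
  simp [f, filter_filter]

end OneExt

theorem card_filter_sigma_fst_eq {ι : Type*} {β : ι → Type*} [Fintype ι] [∀ i, Fintype (β i)]
    (i : ι) : #{v : Σ i, β i | v.1 = i} = Fintype.card (β i) := by
  rw [← Fintype.card_subtype]
  exact Fintype.card_congr (Equiv.sigmaSubtype i)

/-- The graph with parts of sizes 2^0, ..., 2^k has 2^(k+1) - 1 vertices and
1-extendable chromatic number at least k + 1. -/
theorem multipartitePow_card_and_chi (k : ℕ) :
    Fintype.card (Σ i : Fin (k + 1), Fin (2 ^ (i : ℕ))) = 2 ^ (k + 1) - 1 ∧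
      k + 1 ≤ chiOneExt (multipartitePow k) := by
  constructor
  · rw [Fintype.card_sigma]
    simp [Fin.sum_univ_eq_sum_range (fun i => 2 ^ i), Nat.geomSum_eq le_rfl]
  · refine le_chiOneExt fun m c hc => ?_
    have hG : ∀ u v, (multipartitePow k).Adj u v ↔ u.1 ≠ v.1 := fun _ _ => Iff.rfl
    have h_sums (i : Fin (k + 1)) :
        ∃ A : Finset (Fin m),
          ∑ j ∈ A, alphaN ((multipartitePow k).induce {v | c v = j}) = 2 ^ i.1 := by
      simpa [card_filter_sigma_fst_eq] using exists_sum_alphaN_eq_card_part hG c hc i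
    simpa using le_card_of_two_pow_subset_sums _ (k + 1) fun i hi => h_sums ⟨i, hi⟩
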